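/- Let k, k₁, k₂, a₀, a₁, b₁ ∈ ℝ with k ≠ 0. Then u(x,t) = k₁ + k₂ e^{k((-k k₁ a₁ + a₀ k + b₁)t - x)} is an exact solution of the classical PDE: for all x ∈ ℝ and t > 0, ∂u/∂t = a₁ (∂u/∂x)² + (a₁ u + a₀) ∂²u/∂x² + (2k a₁ u - b₁) ∂u/∂x. -/

import Mathlib

/-!
Both partial derivatives of `u` are multiples of `u - k₁`: `∂u/∂t = k c (u - k₁)` with
`c = -k k₁ a₁ + a₀ k + b₁`, `∂u/∂x = -k (u - k₁)` and hence `∂²u/∂x² = k² (u - k₁)`.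
Substituting these, the equation becomes a polynomial identity in the value of `u`.
-/

/-- The exact solution `u(x,t) = k₁ + k₂ e^{k((-k k₁ a₁ + a₀ k + b₁)t - x)}`. -/
noncomputable def uSol (k k₁ k₂ a₀ a₁ b₁ : ℝ) (x t : ℝ) : ℝ :=
  k₁ + k₂ * Real.exp (k * ((-k * k₁ * a₁ + a₀ * k + b₁) * t - x))

theorem HasDerivAt.const_add_const_mul_exp {g : ℝ → ℝ} {g' x : ℝ} (p q : ℝ)
    (hg : HasDerivAt g g' x) :
    HasDerivAt (fun y => p + q * Real.exp (g y)) (g' * (p + q * Real.exp (g x) - p)) x :=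
  ((hg.exp.const_mul q).const_add p).congr_deriv (by ring)

section

variable (k k₁ k₂ a₀ a₁ b₁ : ℝ)

theorem uSol_hasDerivAt_time (x t : ℝ) :
    HasDerivAt (fun s => uSol k k₁ k₂ a₀ a₁ b₁ x s)
      (k * (-k * k₁ * a₁ + a₀ * k + b₁) * (uSol k k₁ k₂ a₀ a₁ b₁ x t - k₁)) t := by
  have hinner : HasDerivAt (fun s => k * ((-k * k₁ * a₁ + a₀ * k + b₁) * s - x))
      (k * (-k * k₁ * a₁ + a₀ * k + b₁)) t := by
    simpa using
      (((hasDerivAt_id t).const_mul (-k * k₁ * a₁ + a₀ * k + b₁)).sub_const x).const_mul k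
  exact hinner.const_add_const_mul_exp k₁ k₂

theorem uSol_hasDerivAt_space (x t : ℝ) :
    HasDerivAt (fun y => uSol k k₁ k₂ a₀ a₁ b₁ y t) (-k * (uSol k k₁ k₂ a₀ a₁ b₁ x t - k₁)) x := by
  have hinner : HasDerivAt (fun y => k * ((-k * k₁ * a₁ + a₀ * k + b₁) * t - y)) (-k) x := by
    simpa using ((hasDerivAt_id x).const_sub ((-k * k₁ * a₁ + a₀ * k + b₁) * t)).const_mul k
  exact hinner.const_add_const_mul_exp k₁ k₂

theorem deriv_uSol_space (t : ℝ) :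
    deriv (fun y => uSol k k₁ k₂ a₀ a₁ b₁ y t) = fun x => -k * (uSol k k₁ k₂ a₀ a₁ b₁ x t - k₁) :=
  funext fun x => (uSol_hasDerivAt_space k k₁ k₂ a₀ a₁ b₁ x t).deriv

theorem deriv_deriv_uSol_space (x t : ℝ) :
    deriv (fun y => deriv (fun y' => uSol k k₁ k₂ a₀ a₁ b₁ y' t) y) x =
      k ^ 2 * (uSol k k₁ k₂ a₀ a₁ b₁ x t - k₁) := by
  rw [deriv_uSol_space, (((uSol_hasDerivAt_space k k₁ k₂ a₀ a₁ b₁ x t).sub_const k₁).const_mul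
    (-k)).deriv]
  ring

end

theorem classical_diffusion_convection_exact_general (k k₁ k₂ a₀ a₁ b₁ : ℝ) :
    ∀ x : ℝ, ∀ t : ℝ, 0 < t →
      deriv (fun s => uSol k k₁ k₂ a₀ a₁ b₁ x s) t =
        a₁ * (deriv (fun y => uSol k k₁ k₂ a₀ a₁ b₁ y t) x) ^ 2
          + (a₁ * uSol k k₁ k₂ a₀ a₁ b₁ x t + a₀) *
            deriv (fun y => deriv (fun y' => uSol k k₁ k₂ a₀ a₁ b₁ y' t) y) x
          + (2 * k * a₁ * uSol k k₁ k₂ a₀ a₁ b₁ x t - b₁) *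
            deriv (fun y => uSol k k₁ k₂ a₀ a₁ b₁ y t) x := by
  intro x t _
  rw [(uSol_hasDerivAt_time k k₁ k₂ a₀ a₁ b₁ x t).deriv, deriv_deriv_uSol_space,
    deriv_uSol_space]
  ring

/-- **Exact solution of a classical nonlinear diffusion–convection equation.**
For `k ≠ 0`, `u(x,t) = k₁ + k₂ e^{k((-k k₁ a₁ + a₀ k + b₁)t - x)}` satisfies
`∂u/∂t = a₁ (∂u/∂x)² + (a₁ u + a₀) ∂²u/∂x² + (2k a₁ u - b₁) ∂u/∂x` for all `x`, `t > 0`. -/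
theorem classical_diffusion_convection_exact (k k₁ k₂ a₀ a₁ b₁ : ℝ) (hk : k ≠ 0) :
    ∀ x : ℝ, ∀ t : ℝ, 0 < t →
      deriv (fun s => uSol k k₁ k₂ a₀ a₁ b₁ x s) t =
        a₁ * (deriv (fun y => uSol k k₁ k₂ a₀ a₁ b₁ y t) x) ^ 2
          + (a₁ * uSol k k₁ k₂ a₀ a₁ b₁ x t + a₀) *
            deriv (fun y => deriv (fun y' => uSol k k₁ k₂ a₀ a₁ b₁ y' t) y) x
          + (2 * k * a₁ * uSol k k₁ k₂ a₀ a₁ b₁ x t - b₁) *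
            deriv (fun y => uSol k k₁ k₂ a₀ a₁ b₁ y t) x :=
  classical_diffusion_convection_exact_general k k₁ k₂ a₀ a₁ b₁
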